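/- For p > 0 and integers k, n ≥ 1, the integral ∫_{ℋ_k} |z|^{-pnk} dV(z, w) over ℋ_k = {(z,w) ∈ ℂ^{1+n} : Σ|w_j|² < |z|^{2k} < 1} equals (2π^{n+1}/n!) ∫₀¹ r^{1 − pnk + 2nk} dr, hence is finite if and only if p < (2nk + 2)/(nk), in which case it equals 2π^{n+1}/(n!(2 + 2nk − pnk)). -/

import Mathlib

open MeasureTheory Finset

/-- The generalized Hartogs triangle `ℋ_k ⊂ ℂ^{1+n}`. -/
def HartogsK (n k : ℕ) : Set (ℂ × (Fin n → ℂ)) :=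
  {p | ∑ j, ‖p.2 j‖ ^ 2 < ‖p.1‖ ^ (2 * k) ∧ ‖p.1‖ ^ (2 * k) < 1}

/-!
The fibre of `ℋ_k` over `z` with `0 < |z| < 1` is the ball of radius `|z|^k` in `ℂⁿ`, of
volume `π^n |z|^{2nk} / n!`, and empty otherwise. By Tonelli and polar coordinates in the
`z`-plane a radial integrand `f(|z|)` therefore integrates over `ℋ_k` to
`(2π^{n+1}/n!) ∫₀¹ r^{2nk+1} f(r) dr`, and for `f(r) = r^e` the last integral is finite
iff `e + 2nk + 1 > -1`.
-/

open scoped ENNReal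
open Set Metric Module

lemma lintegral_fun_norm_addHaar {E : Type*} [NormedAddCommGroup E] [NormedSpace ℝ E]
    [Nontrivial E] [FiniteDimensional ℝ E] [MeasurableSpace E] [BorelSpace E]
    (μ : Measure E) [μ.IsAddHaarMeasure] {f : ℝ → ℝ≥0∞} (hf : Measurable f) :
    ∫⁻ x, f ‖x‖ ∂μ = finrank ℝ E * μ (ball 0 1) *
      ∫⁻ y in Ioi (0 : ℝ), ENNReal.ofReal (y ^ (finrank ℝ E - 1)) * f y :=
  calc
    ∫⁻ x, f ‖x‖ ∂μ = ∫⁻ x : ({(0)}ᶜ : Set E), f ‖x.1‖ ∂(μ.comap (↑)) := by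
      rw [lintegral_subtype_comap (measurableSet_singleton _).compl (fun x => f ‖x‖),
        restrict_compl_singleton]
    _ = ∫⁻ x, f x.2 ∂μ.toSphere.prod (.volumeIoiPow (finrank ℝ E - 1)) := by
      simpa using μ.measurePreserving_homeomorphUnitSphereProd.lintegral_comp_emb
        (Homeomorph.measurableEmbedding _) (f ∘ Subtype.val ∘ Prod.snd)
    _ = μ.toSphere univ * ∫⁻ x : Ioi (0 : ℝ), f x ∂.volumeIoiPow (finrank ℝ E - 1) := by
      rw [← lintegral_map (f := fun x : Ioi (0 : ℝ) => f x) (hf.comp measurable_subtype_coe)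
        measurable_snd, Measure.map_snd_prod, lintegral_smul_measure, smul_eq_mul]
    _ = _ := by
      rw [Measure.toSphere_apply_univ, Measure.volumeIoiPow,
        lintegral_withDensity_eq_lintegral_mul _ (by fun_prop)
          (g := fun x : Ioi (0 : ℝ) => f x) (hf.comp measurable_subtype_coe),
        ← lintegral_subtype_comap measurableSet_Ioi
          (fun y => ENNReal.ofReal (y ^ (finrank ℝ E - 1)) * f y)]
      simp [mul_assoc]

lemma lintegral_fun_norm_complex {f : ℝ → ℝ≥0∞} (hf : Measurable f) :
    ∫⁻ z : ℂ, f ‖z‖ =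
      ENNReal.ofReal (2 * Real.pi) * ∫⁻ r in Ioi (0 : ℝ), ENNReal.ofReal r * f r := by
  rw [lintegral_fun_norm_addHaar volume hf, Complex.finrank_real_complex, Complex.volume_ball,
    ENNReal.ofReal_mul zero_le_two, ← ENNReal.ofReal_coe_nnreal, NNReal.coe_real_pi]
  simp

lemma setLIntegral_prod_comp_fst {α β : Type*} [MeasurableSpace α] [MeasurableSpace β]
    {μ : Measure α} {ν : Measure β} [SFinite ν] {s : Set (α × β)} (hs : MeasurableSet s)
    {f : α → ℝ≥0∞} (hf : Measurable f) :
    ∫⁻ q in s, f q.1 ∂μ.prod ν = ∫⁻ x, f x * ν (Prod.mk x ⁻¹' s) ∂μ := by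
  rw [← lintegral_indicator hs,
    lintegral_prod _ (Measurable.indicator (by fun_prop) hs).aemeasurable]
  refine lintegral_congr fun x => ?_
  rw [← setLIntegral_const, ← lintegral_indicator (measurable_prodMk_left hs)]
  rfl

lemma Complex.volume_sum_norm_sq_lt {ι : Type*} [Fintype ι] [Nonempty ι] {r : ℝ}
    (hr : 0 ≤ r) :
    volume {w : ι → ℂ | ∑ i, ‖w i‖ ^ 2 < r} = ENNReal.ofReal
      (Real.pi ^ Fintype.card ι / (Fintype.card ι).factorial * r ^ Fintype.card ι) := by
  have hset : {w : ι → ℂ | ∑ i, ‖w i‖ ^ 2 < r} =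
      {w : ι → ℂ | (∑ i, ‖w i‖ ^ (2 : ℝ)) ^ (1 / 2 : ℝ) < √r} := by
    ext w
    simp only [mem_ofPred_eq, Real.rpow_two, ← Real.sqrt_eq_rpow]
    exact (Real.sqrt_lt_sqrt_iff (by positivity)).symm
  rw [hset, Complex.volume_sum_rpow_lt (ι := ι) (p := 2) one_le_two √r,
    ← ENNReal.ofReal_pow (Real.sqrt_nonneg r), pow_mul, Real.sq_sqrt hr,
    ← ENNReal.ofReal_mul (by positivity), mul_comm]
  congr 2
  rw [div_self two_ne_zero, one_add_one_eq_two, Real.Gamma_two, mul_one,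
    mul_div_cancel_left₀ _ two_ne_zero, Real.Gamma_nat_eq_factorial]

lemma measurableSet_HartogsK (n k : ℕ) : MeasurableSet (HartogsK n k) := by
  rw [HartogsK, ofPred_and]
  exact (measurableSet_lt (by fun_prop) (by fun_prop)).inter
    (measurableSet_lt (by fun_prop) (by fun_prop))

lemma volume_preimage_mk_HartogsK {n k : ℕ} (hn : 0 < n) (hk : 0 < k) (z : ℂ) :
    volume (Prod.mk z ⁻¹' HartogsK n k) = (Set.Ioo (0 : ℝ) 1).indicator
      (fun r => ENNReal.ofReal (Real.pi ^ n / n.factorial * r ^ (2 * n * k))) ‖z‖ := by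
  have : Nonempty (Fin n) := Fin.pos_iff_nonempty.mp hn
  by_cases hz : ‖z‖ ∈ Set.Ioo (0 : ℝ) 1
  · have hslice :
        Prod.mk z ⁻¹' HartogsK n k = {w | ∑ j, ‖w j‖ ^ 2 < ‖z‖ ^ (2 * k)} := by
      ext w
      simp [HartogsK, pow_lt_one₀ (norm_nonneg z) hz.2 (by omega : 2 * k ≠ 0)]
    rw [hslice, Complex.volume_sum_norm_sq_lt (by positivity), indicator_of_mem hz,
      Fintype.card_fin, ← pow_mul, mul_right_comm]
  · rw [indicator_of_notMem hz, measure_eq_zero_iff_ae_notMem]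
    refine ae_of_all _ fun w ⟨hw, hz1⟩ => hz ⟨?_, ?_⟩
    · refine (norm_nonneg z).lt_of_ne fun h0 => ?_
      rw [← h0, zero_pow (by omega)] at hw
      exact hw.not_ge (by positivity)
    · exact (pow_lt_one_iff_of_nonneg (norm_nonneg z) (by omega)).1 hz1

lemma lintegral_HartogsK {n k : ℕ} (hn : 0 < n) (hk : 0 < k) {f : ℝ → ℝ≥0∞}
    (hf : Measurable f) :
    ∫⁻ q in HartogsK n k, f ‖q.1‖ = ENNReal.ofReal (2 * Real.pi ^ (n + 1) / n.factorial) *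
      ∫⁻ r in Set.Ioo (0 : ℝ) 1, ENNReal.ofReal (r ^ (2 * n * k + 1)) * f r := by
  let g (r : ℝ) : ℝ≥0∞ := f r * (Set.Ioo (0 : ℝ) 1).indicator
    (fun r => ENNReal.ofReal (Real.pi ^ n / n.factorial * r ^ (2 * n * k))) r
  have hg (r : ℝ) : ENNReal.ofReal r * g r = (Set.Ioo (0 : ℝ) 1).indicator (fun r =>
      ENNReal.ofReal (Real.pi ^ n / n.factorial) *
        (ENNReal.ofReal (r ^ (2 * n * k + 1)) * f r)) r := by
    by_cases hr : r ∈ Set.Ioo (0 : ℝ) 1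
    · simp only [g, indicator_of_mem hr]
      rw [ENNReal.ofReal_mul (by positivity), pow_succ, ENNReal.ofReal_mul (pow_nonneg hr.1.le _)]
      ring
    · simp [g, indicator_of_notMem hr]
  rw [Measure.volume_eq_prod, setLIntegral_prod_comp_fst (f := fun z : ℂ => f ‖z‖)
    (measurableSet_HartogsK n k) (by fun_prop)]
  simp_rw [volume_preimage_mk_HartogsK hn hk]
  rw [lintegral_fun_norm_complex (f := g)
    (hf.mul ((Measurable.indicator (by fun_prop) measurableSet_Ioo)))]
  simp_rw [hg]
  rw [setLIntegral_indicator measurableSet_Ioo, Set.inter_eq_left.2 Set.Ioo_subset_Ioi_self,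
    lintegral_const_mul _ (by fun_prop), ← mul_assoc, ← ENNReal.ofReal_mul (by positivity),
    pow_succ']
  congr 2
  ring

lemma lintegral_ofReal_rpow_Ioo_ne_top_iff {a : ℝ} :
    ∫⁻ r in Set.Ioo (0 : ℝ) 1, ENNReal.ofReal (r ^ a) ≠ ∞ ↔ -1 < a := by
  rw [lintegral_ofReal_ne_top_iff_integrable (by fun_prop)
    (ae_restrict_of_forall_mem measurableSet_Ioo fun r hr => Real.rpow_nonneg hr.1.le a),
    ← IntegrableOn, intervalIntegral.integrableOn_Ioo_rpow_iff one_pos]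

lemma integral_rpow_Ioo_zero_one {a : ℝ} (ha : -1 < a) :
    ∫ r in Set.Ioo (0 : ℝ) 1, r ^ a = 1 / (a + 1) := by
  rw [← integral_Ioc_eq_integral_Ioo, ← intervalIntegral.integral_of_le zero_le_one,
    integral_rpow (Or.inl ha), Real.one_rpow, Real.zero_rpow (by linarith), sub_zero]

lemma lintegral_HartogsK_norm_rpow {n k : ℕ} (hn : 0 < n) (hk : 0 < k) (e : ℝ) :
    ∫⁻ q in HartogsK n k, ENNReal.ofReal (‖q.1‖ ^ e) =
      ENNReal.ofReal (2 * Real.pi ^ (n + 1) / n.factorial) *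
        ∫⁻ r in Set.Ioo (0 : ℝ) 1, ENNReal.ofReal (r ^ (e + (2 * n * k + 1))) := by
  rw [lintegral_HartogsK hn hk (f := fun r => ENNReal.ofReal (r ^ e)) (by fun_prop)]
  congr 1
  refine setLIntegral_congr_fun measurableSet_Ioo fun r hr => ?_
  rw [← ENNReal.ofReal_mul (pow_nonneg hr.1.le _), ← Real.rpow_natCast, ← Real.rpow_add hr.1,
    add_comm]
  push_cast
  ring

lemma integrableOn_HartogsK_norm_rpow_iff {n k : ℕ} (hn : 0 < n) (hk : 0 < k) {e : ℝ} :
    IntegrableOn (fun q : ℂ × (Fin n → ℂ) => ‖q.1‖ ^ e) (HartogsK n k) ↔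
      -(2 * n * k + 2) < e := by
  have hC : ENNReal.ofReal (2 * Real.pi ^ (n + 1) / n.factorial) ≠ 0 :=
    (ENNReal.ofReal_pos.2 (by positivity)).ne'
  rw [IntegrableOn, ← lintegral_ofReal_ne_top_iff_integrable
    (by fun_prop : Measurable fun q : ℂ × (Fin n → ℂ) => ‖q.1‖ ^ e).aestronglyMeasurable
    (ae_of_all _ fun q => Real.rpow_nonneg (norm_nonneg _) e), lintegral_HartogsK_norm_rpow hn hk,
    ne_eq, ENNReal.mul_eq_top]
  simp only [hC, ENNReal.ofReal_ne_top, ne_eq, not_false_eq_true, true_and, false_and, or_false]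
  rw [← ne_eq, lintegral_ofReal_rpow_Ioo_ne_top_iff]
  constructor <;> intro h <;> linarith

lemma integral_HartogsK_norm_rpow {n k : ℕ} (hn : 0 < n) (hk : 0 < k) {e : ℝ}
    (he : -(2 * n * k + 2) < e) :
    ∫ q in HartogsK n k, ‖q.1‖ ^ e =
      2 * Real.pi ^ (n + 1) / n.factorial / (e + 2 * n * k + 2) := by
  have ha : -1 < e + (2 * n * k + 1) := by linarith
  rw [integral_eq_lintegral_of_nonneg_ae (ae_of_all _ fun q => Real.rpow_nonneg (norm_nonneg _) e)
    (by fun_prop : Measurable fun q : ℂ × (Fin n → ℂ) => ‖q.1‖ ^ e).aestronglyMeasurable,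
    lintegral_HartogsK_norm_rpow hn hk, ENNReal.toReal_mul,
    ENNReal.toReal_ofReal (by positivity),
    ← integral_eq_lintegral_of_nonneg_ae (ae_restrict_of_forall_mem measurableSet_Ioo
      fun r hr => Real.rpow_nonneg hr.1.le _) (by fun_prop), integral_rpow_Ioo_zero_one ha]
  ring

theorem integral_abs_z_pow_HartogsK_general (n k : ℕ) (hn : 1 ≤ n) (hk : 1 ≤ k) (p : ℝ) :
    (p < (2 * n * k + 2) / (n * k) →
      IntegrableOn (fun q : ℂ × (Fin n → ℂ) => ‖q.1‖ ^ (-(p * n * k))) (HartogsK n k) volume ∧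
      ∫ q in HartogsK n k, ‖q.1‖ ^ (-(p * n * k)) =
        2 * Real.pi ^ (n + 1) / ((Nat.factorial n : ℝ) * (2 + 2 * n * k - p * n * k))) ∧
    ((2 * n * k + 2) / (n * k) ≤ p →
      ¬ IntegrableOn (fun q : ℂ × (Fin n → ℂ) => ‖q.1‖ ^ (-(p * n * k))) (HartogsK n k) volume) := by
  have hnk : (0 : ℝ) < n * k := by positivity
  refine ⟨fun hp => ?_, fun hp hint => ?_⟩
  · have he : -(2 * n * k + 2) < -(p * n * k) := by
      rw [lt_div_iff₀ hnk] at hp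
      linarith
    refine ⟨(integrableOn_HartogsK_norm_rpow_iff hn hk).2 he, ?_⟩
    rw [integral_HartogsK_norm_rpow hn hk he, div_div]
    ring
  · have he := (integrableOn_HartogsK_norm_rpow_iff hn hk).1 hint
    rw [div_le_iff₀ hnk] at hp
    linarith

/-- For `p > 0`, `∫_{ℋ_k} |z|^{-pnk} dV` is finite iff `p < (2nk+2)/(nk)`, in which case
it equals `2π^{n+1}/(n!(2 + 2nk − pnk))`. -/
theorem integral_abs_z_pow_HartogsK (n k : ℕ) (hn : 1 ≤ n) (hk : 1 ≤ k) (p : ℝ) (hp : 0 < p) :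
    (p < (2 * n * k + 2) / (n * k) →
      IntegrableOn (fun q : ℂ × (Fin n → ℂ) => ‖q.1‖ ^ (-(p * n * k))) (HartogsK n k) volume ∧
      ∫ q in HartogsK n k, ‖q.1‖ ^ (-(p * n * k)) =
        2 * Real.pi ^ (n + 1) / ((Nat.factorial n : ℝ) * (2 + 2 * n * k - p * n * k))) ∧
    ((2 * n * k + 2) / (n * k) ≤ p →
      ¬ IntegrableOn (fun q : ℂ × (Fin n → ℂ) => ‖q.1‖ ^ (-(p * n * k))) (HartogsK n k) volume) :=
  integral_abs_z_pow_HartogsK_general n k hn hk p
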